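/- Fix integers n, k, t with the construction: starting from pairs of letters over an alphabet of l letters encoded as single letters over an alphabet of l² letters, the maximal size β(t, l², n) of an n-light class of word-cycles of length t over l² letters is at least β(2t, l, n), the maximal size of an n-light class of word-cycles of length 2t over l letters. -/

import Mathlib

/-- `u` repeated `d` times. -/
def wpow {α : Type*} (u : List α) (d : ℕ) : List α := (List.replicate d u).flatten

/-- Two words are comparable if neither is a prefix of the other. -/
def WComparable {α : Type*} (u v : List α) : Prop := ¬ u <+: v ∧ ¬ v <+: u

/-- An `n`-light class of `N` word-cycles of length `t` over an `l`-letter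
alphabet: a numbered family of primitive words of length `t`, pairwise strongly
comparable (every cyclic shift of one is comparable with every cyclic shift of
another), such that the partial order `u ≺ v ↔` (`u` lexicographically smaller
than `v` and the word-cycle of `u` has smaller index) on the words occurring in
the word-cycles has no antichain of size `n`. -/
def IsNLightClass (t l n N : ℕ) : Prop :=
  ∃ C : Fin N → List (Fin l),
    (∀ i, (C i).length = t) ∧
    (∀ i, ¬ ∃ (v : List (Fin l)) (k : ℕ), 1 < k ∧ C i = wpow v k) ∧
    (∀ i j : Fin N, i ≠ j → ∀ r s : ℕ, WComparable ((C i).rotate r) ((C j).rotate s)) ∧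
    ¬ ∃ A : Finset (Fin N × Fin t), A.card = n ∧
        ∀ a ∈ A, ∀ b ∈ A, a ≠ b →
          ¬ (List.Lex (· < ·) ((C a.1).rotate a.2) ((C b.1).rotate b.2) ∧ a.1 < b.1) ∧
          ¬ (List.Lex (· < ·) ((C b.1).rotate b.2) ((C a.1).rotate a.2) ∧ b.1 < a.1)

/-- `β(t, l, n)`: the maximal number of word-cycles in an `n`-light class of
word-cycles of length `t` over an `l`-letter alphabet. -/
noncomputable def beta (t l n : ℕ) : ℕ := sSup {N | IsNLightClass t l n N}

/-! Every word of length `2t` over `Fin l` is the expansion of a word of length `t` over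
`Fin (l ^ 2) ≃o Fin l ×ₗ Fin l`, each letter standing for the pair of letters it codes.
Expansion turns rotation by `r` into rotation by `2r`, commutes with powers and preserves and
reflects the lexicographic order. Hence a proper power, a prefix relation between rotations, or
an antichain `{(i, r)}` in the recoded family would give one in the original class (the
antichain being `{(i, 2r)}`). -/

namespace List

variable {α β : Type*}

def expand (g : β → α ×ₗ α) (y : List β) : List α :=
  y.flatMap fun b => [(ofLex (g b)).1, (ofLex (g b)).2]

section

variable (g : β → α ×ₗ α)

@[simp]
theorem expand_nil : expand g [] = [] := rfl

@[simp]
theorem expand_cons (b : β) (y : List β) :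
    expand g (b :: y) = (ofLex (g b)).1 :: (ofLex (g b)).2 :: expand g y := rfl

@[simp]
theorem expand_append (y z : List β) : expand g (y ++ z) = expand g y ++ expand g z :=
  flatMap_append

@[simp]
theorem length_expand (y : List β) : (expand g y).length = 2 * y.length := by
  induction y with
  | nil => rfl
  | cons b y ih => simp only [expand_cons, length_cons, ih]; ring

theorem expand_rotate (y : List β) (r : ℕ) :
    expand g (y.rotate r) = (expand g y).rotate (2 * r) := by
  induction r with
  | zero => simp
  | succ r ih =>
    have step : ∀ z : List β, expand g (z.rotate 1) = (expand g z).rotate 2 := by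
      rintro (_ | ⟨b, z⟩) <;> simp
    rw [← rotate_rotate, step, ih, rotate_rotate, mul_add_one]

theorem expand_wpow (y : List β) (k : ℕ) : expand g (wpow y k) = wpow (expand g y) k := by
  induction k with
  | zero => rfl
  | succ k ih =>
    simp only [wpow, replicate_succ, flatten_cons, expand_append] at ih ⊢
    rw [ih]

theorem exists_expand_eq (hg : Function.Surjective g) {w : List α} (hw : Even w.length) :
    ∃ y, expand g y = w := by
  induction w using List.twoStepInduction with
  | nil => exact ⟨[], rfl⟩
  | singleton a => simp at hw
  | cons_cons a a' w ih _ =>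
    obtain ⟨y, rfl⟩ := ih (by simpa [Nat.even_add_one, parity_simps] using hw)
    obtain ⟨b, hb⟩ := hg (toLex (a, a'))
    exact ⟨b :: y, by simp [hb]⟩

end

theorem lex_expand_iff [LinearOrder α] [LinearOrder β] {g : β → α ×ₗ α} (hg : StrictMono g)
    {y z : List β} :
    Lex (· < ·) (expand g y) (expand g z) ↔ Lex (· < ·) y z := by
  induction y generalizing z with
  | nil => cases z <;> simp
  | cons b y ih =>
    cases z with
    | nil => simp
    | cons c z =>
      simp only [expand_cons, cons_lex_cons_iff, ih, ← hg.lt_iff_lt, Prod.Lex.lt_iff,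
        ← hg.injective.eq_iff, ← ofLex_inj (a := g b), Prod.ext_iff]
      tauto

end List

open List

theorem WComparable.of_length_eq_of_ne {α : Type*} {u v : List α} (h : u.length = v.length)
    (hne : u ≠ v) : WComparable u v :=
  ⟨fun hp => hne (hp.eq_of_length h), fun hp => hne (hp.eq_of_length h.symm).symm⟩

/-- The paper's coding of `(a_i, a_j)` by `b_{i·l+j}`: the only order isomorphism. -/
def finSqOrderIsoLex (l : ℕ) : Fin (l ^ 2) ≃o Fin l ×ₗ Fin l :=
  Fintype.orderIsoFinOfCardEq _ (by simp [sq])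

theorem IsNLightClass.of_two_mul {t l n N : ℕ} (h : IsNLightClass (2 * t) l n N) :
    IsNLightClass t (l ^ 2) n N := by
  obtain ⟨C, hlen, hprim, hcomp, hanti⟩ := h
  let g := finSqOrderIsoLex l
  choose D hD using fun i => exists_expand_eq g g.surjective (w := C i) (by simp [hlen])
  have hDlen : ∀ i, (D i).length = t := fun i => by
    have := congrArg length (hD i)
    rw [length_expand, hlen] at this
    omega
  have hrot : ∀ i r, expand g ((D i).rotate r) = (C i).rotate (2 * r) := by
    simp [expand_rotate, hD]
  refine ⟨D, hDlen, ?_, ?_, ?_⟩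
  · rintro i ⟨v, k, hk, hv⟩
    exact hprim i ⟨expand g v, k, hk, by rw [← hD, hv, expand_wpow]⟩
  · intro i j hij r s
    refine .of_length_eq_of_ne (by simp [hDlen]) fun heq => (hcomp i j hij (2 * r) (2 * s)).1 ?_
    rw [← hrot, ← hrot, heq]
  · rintro ⟨A, hcard, hA⟩
    let double : Fin t ↪ Fin (2 * t) :=
      ⟨fun r => ⟨2 * r, by omega⟩, fun r s h => by simpa [Fin.ext_iff] using h⟩
    refine hanti ⟨A.map ((Function.Embedding.refl _).prodMap double), by simp [hcard], ?_⟩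
    have hlex : ∀ p q : Fin N × Fin t,
        Lex (· < ·) ((D p.1).rotate p.2) ((D q.1).rotate q.2) ↔
          Lex (· < ·) ((C p.1).rotate (2 * p.2)) ((C q.1).rotate (2 * q.2)) := fun p q => by
      rw [← hrot, ← hrot, lex_expand_iff g.strictMono]
    simp only [Finset.forall_mem_map]
    intro a ha b hb hab
    have := hA a ha b hb (ne_of_apply_ne _ hab)
    rw [hlex, hlex] at this
    exact this

theorem isNLightClass_bddAbove (t l n : ℕ) : BddAbove {N | IsNLightClass t l n N} := by
  refine ⟨l ^ t, ?_⟩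
  rintro N ⟨C, hlen, -, hcomp, -⟩
  let v : Fin N → List.Vector (Fin l) t := fun i => ⟨C i, hlen i⟩
  have hv : Function.Injective v := by
    intro i j hij
    by_contra hne
    have hC : C i = C j := congrArg Subtype.val hij
    exact (hcomp i j hne 0 0).1 (by rw [hC])
  simpa using Fintype.card_le_of_injective v hv

/-- The encoding inequality `β(t, l², n) ≥ β(2t, l, n)`. -/
theorem stmt19 (t l n : ℕ) : beta (2 * t) l n ≤ beta t (l ^ 2) n :=
  csSup_le_csSup' (isNLightClass_bddAbove t (l ^ 2) n) fun _ => IsNLightClass.of_two_mul
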